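/- Lipton-pattern characterization of reducible mover-type sequences: for a list w = [m1, ..., mk] of mover types, let c(w) denote the left-associated fold m1 ; m2 ; ... ; mk of sequential composition with unit B. Then c(w) ⊑ N if and only if w can be written as a concatenation u ++ v ++ x where every element of u lies in {B, R}, v has length at most one and its element (if any) satisfies m ⊑ N, and every element of x lies in {B, L} (i.e., w matches the pattern R* N? L* with both-movers allowed anywhere). -/
import Mathlib


/-- Mover types: both-mover, right-mover, left-mover, non-mover, and top. -/
inductive MoverType where
  | B | R | L | N | top
deriving DecidableEq

namespace MoverType

/-- The partial order on mover types: `B ⊑ R ⊑ N ⊑ ⊤` and `B ⊑ L ⊑ N ⊑ ⊤`,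
with `R` and `L` incomparable. -/
def sqle : MoverType → MoverType → Prop
  | .B, _ => True
  | _, .top => True
  | .R, .R => True
  | .R, .N => True
  | .L, .L => True
  | .L, .N => True
  | .N, .N => True
  | _, _ => False

/-- Sequential composition of mover types. -/
def comp : MoverType → MoverType → MoverType
  | .B, m => m
  | m, .B => m
  | .top, _ => .top
  | _, .top => .top
  | .R, .R => .R
  | .R, .L => .N
  | .R, .N => .N
  | .L, .L => .L
  | .L, .R => .top
  | .L, .N => .top
  | .N, .L => .N
  | .N, .R => .top
  | .N, .N => .top

end MoverType

/-- `c(w)`: the left-associated fold of sequential composition over the list `w`,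
with unit `B`. -/
def listComp (w : List MoverType) : MoverType := w.foldl MoverType.comp MoverType.B

open MoverType

lemma sqle_N_iff (m : MoverType) : sqle m .N ↔ m ≠ .top := by
  cases m <;> simp [sqle]

lemma comp_top (m : MoverType) : comp .top m = .top := by cases m <;> rfl

lemma comp_top_right (m : MoverType) : comp m .top = .top := by cases m <;> rfl

lemma foldl_BR (w : List MoverType) : ∀ a, (a = B ∨ a = R) →
    (∀ m ∈ w, m = B ∨ m = R) → (w.foldl comp a = B ∨ w.foldl comp a = R) := by
  induction w with
  | nil => intro a ha _; exact ha
  | cons m w ih =>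
    intro a ha hw
    have hm := hw m (by simp)
    refine ih (comp a m) ?_ (fun x hx => hw x (by simp [hx]))
    rcases ha with rfl | rfl <;> rcases hm with rfl | rfl <;> simp [comp]

lemma foldl_BR_rev (w : List MoverType) : ∀ a,
    (w.foldl comp a = B ∨ w.foldl comp a = R) →
    (a = B ∨ a = R) ∧ ∀ m ∈ w, m = B ∨ m = R := by
  induction w with
  | nil => intro a ha; exact ⟨ha, by simp⟩
  | cons m w ih =>
    intro a ha
    obtain ⟨h1, h2⟩ := ih (comp a m) ha
    have : (a = B ∨ a = R) ∧ (m = B ∨ m = R) := by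
      cases a <;> cases m <;> simp_all [comp]
    exact ⟨this.1, by simpa [this.2] using h2⟩

lemma foldl_ne_top (x : List MoverType) : ∀ a, a ≠ .top →
    (∀ m ∈ x, m = B ∨ m = L) → x.foldl comp a ≠ .top := by
  induction x with
  | nil => intro a ha _; exact ha
  | cons m x ih =>
    intro a ha hx
    have hm := hx m (by simp)
    refine ih (comp a m) ?_ (fun y hy => hx y (by simp [hy]))
    cases a <;> rcases hm with rfl | rfl <;> simp_all [comp]

/-- Lipton-pattern characterization of reducible mover-type sequences: `c(w) ⊑ N`
iff `w` matches the pattern `R* N? L*` (with both-movers allowed anywhere). -/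
theorem listComp_sqle_N_iff (w : List MoverType) :
    MoverType.sqle (listComp w) .N ↔
      ∃ u v x : List MoverType,
        w = u ++ v ++ x ∧
        (∀ m ∈ u, m = MoverType.B ∨ m = MoverType.R) ∧
        v.length ≤ 1 ∧
        (∀ m ∈ v, MoverType.sqle m .N) ∧
        (∀ m ∈ x, m = MoverType.B ∨ m = MoverType.L) := by
  constructor
  · induction w using List.reverseRecOn with
    | nil => intro _; exact ⟨[], [], [], by simp⟩
    | append_singleton w m ih =>
      intro h
      rw [listComp, List.foldl_append] at h
      have hcm : comp (w.foldl comp B) m ≠ .top := (sqle_N_iff _).1 h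
      have hw : MoverType.sqle (listComp w) .N := by
        rw [sqle_N_iff]
        intro htop
        rw [listComp] at htop
        rw [htop, comp_top] at hcm
        exact hcm rfl
      obtain ⟨u, v, x, rfl, hu, hv1, hv2, hx⟩ := ih hw
      cases m with
      | B =>
        exact ⟨u, v, x ++ [B], by simp, hu, hv1, hv2, by
          intro m hm; rcases List.mem_append.1 hm with h' | h'
          · exact hx m h'
          · simp_all⟩
      | L =>
        exact ⟨u, v, x ++ [L], by simp, hu, hv1, hv2, by
          intro m hm; rcases List.mem_append.1 hm with h' | h'
          · exact hx m h'
          · simp_all⟩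
      | R =>
        have hbr : (u ++ v ++ x).foldl comp B = B ∨ (u ++ v ++ x).foldl comp B = R := by
          rcases hA : (u ++ v ++ x).foldl comp B with _ | _ | _ | _ | _ <;>
            simp_all [comp]
        obtain ⟨_, h2⟩ := foldl_BR_rev _ _ hbr
        refine ⟨u ++ v ++ x ++ [R], [], [], by simp, ?_, by simp, by simp, by simp⟩
        intro m hm
        rcases List.mem_append.1 hm with h' | h'
        · exact h2 m h'
        · simp_all
      | N =>
        have hbr : (u ++ v ++ x).foldl comp B = B ∨ (u ++ v ++ x).foldl comp B = R := by
          rcases hA : (u ++ v ++ x).foldl comp B with _ | _ | _ | _ | _ <;>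
            simp_all [comp]
        obtain ⟨_, h2⟩ := foldl_BR_rev _ _ hbr
        refine ⟨u ++ v ++ x, [N], [], by simp, h2, by simp, by simp [sqle], by simp⟩
      | top => exact absurd (comp_top_right _) hcm
  · rintro ⟨u, v, x, rfl, hu, hv1, hv2, hx⟩
    rw [sqle_N_iff, listComp, List.append_assoc, List.foldl_append, List.foldl_append]
    have hubr := foldl_BR u B (Or.inl rfl) hu
    have hv' : (v.foldl comp (u.foldl comp B)) ≠ .top := by
      match v, hv1 with
      | [], _ => rcases hubr with h | h <;> simp [h]
      | [m], _ =>
        have hm : m ≠ .top := (sqle_N_iff m).1 (hv2 m (by simp))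
        rcases hubr with h | h <;> cases m <;> simp_all [comp]
    exact foldl_ne_top x _ hv' hx
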